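/- arXiv:1012.0872 — 7 statements merged into one kernel-verified Lean document; each statement's English description precedes it below -/
import Mathlib

section
/- Suppose (θ_x)_{x∈X} is a measurable family of nonzero complex numbers with log|θ_x| bounded and ∫ log|θ_x| dp(x) > 0 for a probability measure p on X. Then there exist β, σ ∈ (0,1), k ∈ ℕ, positive reals (σ_x) and integers (s_x) such that: (a) σ_x ≤ β·|θ_x| for all x; (b) σ_x = σ^{s_x} for all x; (c) ∫ log σ_x dp(x) > 4/k. -/
open MeasureTheory

/-- Lemma `l.lemmakey1`: given a measurable family of nonzero complex numbers with
bounded log-modulus and positive mean log-modulus, there are `β, σ ∈ (0,1)`, `k ∈ ℕ`,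
positive reals `σ_x` and integers `s_x` with (a) `σ_x ≤ β·|θ_x|`, (b) `σ_x = σ^{s_x}`,
(c) `∫ log σ_x dp > 4/k`. -/
theorem stmt0 {X : Type*} [MeasurableSpace X] (p : Measure X) [IsProbabilityMeasure p]
    (θ : X → ℂ) (hθmeas : Measurable θ) (hθne : ∀ x, θ x ≠ 0)
    (C : ℝ) (hbound : ∀ x, |Real.log (‖θ x‖)| ≤ C)
    (hpos : 0 < ∫ x, Real.log (‖θ x‖) ∂p) :
    ∃ (β σ : ℝ) (k : ℕ) (σf : X → ℝ) (s : X → ℤ),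
      β ∈ Set.Ioo (0:ℝ) 1 ∧ σ ∈ Set.Ioo (0:ℝ) 1 ∧ 0 < k ∧
      (∀ x, 0 < σf x) ∧
      (∀ x, σf x ≤ β * ‖θ x‖) ∧
      (∀ x, σf x = σ ^ (s x)) ∧
      (4 / (k : ℝ) < ∫ x, Real.log (σf x) ∂p) := by
  set L : X → ℝ := fun x => Real.log (‖θ x‖) with hL
  set I : ℝ := ∫ x, L x ∂p with hI
  have hLmeas : Measurable L :=
    (hθmeas.norm).log
  -- pick k
  set k : ℕ := ⌈6 / I⌉₊ + 1 with hk
  have hkpos : 0 < k := Nat.succ_pos _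
  have hkR : (0:ℝ) < (k : ℝ) := by exact_mod_cast hkpos
  have h6k : 6 / (k : ℝ) < I := by
    have h1 : 6 / I < (k : ℝ) := by
      calc 6 / I ≤ ⌈6 / I⌉₊ := Nat.le_ceil _
        _ < (k : ℝ) := by exact_mod_cast Nat.lt_succ_self _
    calc 6 / (k : ℝ) < 6 / (6 / I) := by
          apply div_lt_div_of_pos_left (by norm_num) (by positivity) h1
      _ = I := by field_simp
  set σ : ℝ := Real.exp (-1 / k) with hσ
  have hσpos : 0 < σ := Real.exp_pos _
  have hσlt : σ < 1 := by
    rw [hσ, Real.exp_lt_one_iff, neg_div]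
    have : (0:ℝ) < 1 / k := by positivity
    linarith
  set s : X → ℤ := fun x => ⌈1 - (k : ℝ) * L x⌉ with hs
  have hsmeas : Measurable s := (measurable_const.sub (hLmeas.const_mul _)).ceil
  set σf : X → ℝ := fun x => σ ^ (s x) with hσf
  have hσfpos : ∀ x, 0 < σf x := fun x => zpow_pos hσpos _
  have hσfexp : ∀ x, σf x = Real.exp ((s x : ℝ) * (-1 / k)) := by
    intro x
    rw [hσf]
    show σ ^ (s x) = _
    rw [hσ, ← Real.rpow_intCast, ← Real.exp_mul]
    ring_nf
  have hlogσf : ∀ x, Real.log (σf x) = (s x : ℝ) * (-1 / k) := by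
    intro x; rw [hσfexp x, Real.log_exp]
  have habs_pos : ∀ x, 0 < ‖θ x‖ := fun x =>
    norm_pos_iff.mpr (hθne x)
  have hσfmeas : Measurable σf := measurable_from_top.comp hsmeas
  refine ⟨σ, σ, k, σf, s, ⟨hσpos, hσlt⟩, ⟨hσpos, hσlt⟩, hkpos, hσfpos, ?_, fun x => rfl, ?_⟩
  · intro x
    have hceil : (1 : ℝ) - (k : ℝ) * L x ≤ (s x : ℝ) := Int.le_ceil _
    have hth : ‖θ x‖ = Real.exp (L x) := (Real.exp_log (habs_pos x)).symm
    rw [hσfexp x, hth, hσ, ← Real.exp_add]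
    apply Real.exp_le_exp.2
    calc (s x : ℝ) * (-1 / k) = (-(s x : ℝ)) / k := by ring
      _ ≤ (-1 + (k : ℝ) * L x) / k := by
          apply div_le_div_of_nonneg_right ?_ hkR.le
          · linarith
      _ = -1 / k + L x := by field_simp
  · -- integral bound
    have hlb : ∀ x, L x - 2 / k ≤ Real.log (σf x) := by
      intro x
      have hceil : (s x : ℝ) < (1 - (k : ℝ) * L x) + 1 := Int.ceil_lt_add_one _
      rw [hlogσf x]
      have h2k : 2 / (k:ℝ) * k = 2 := div_mul_cancel₀ _ (ne_of_gt hkR)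
      have : (s x : ℝ) * (-1 / k) = -(s x : ℝ) / k := by ring
      rw [this, le_div_iff₀ hkR]
      nlinarith
    have hLint : Integrable L p := by
      by_contra h
      rw [hI, integral_undef h] at hpos
      exact lt_irrefl 0 hpos
    have hσfint : Integrable (fun x => Real.log (σf x)) p := by
      apply Integrable.mono' (g := fun _ : X => ((k : ℝ) * C + 2) / k)
        (integrable_const _)
      · exact (Real.measurable_log.comp hσfmeas).aestronglyMeasurable
      · filter_upwards with x
        rw [hlogσf x, Real.norm_eq_abs, abs_mul]
        have hC : 0 ≤ C := le_trans (abs_nonneg _) (hbound x)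
        have h1 : |(s x : ℝ)| ≤ (k : ℝ) * C + 2 := by
          have h2 : (s x : ℝ) < (1 - (k : ℝ) * L x) + 1 := Int.ceil_lt_add_one _
          have h3 : (1 : ℝ) - (k : ℝ) * L x ≤ (s x : ℝ) := Int.le_ceil _
          have h4 : |L x| ≤ C := hbound x
          rw [abs_le]
          constructor <;> nlinarith [abs_le.1 h4, hkR]
        have h5 : |(-1 : ℝ) / k| = 1 / k := by
          rw [abs_div, abs_neg, abs_one, abs_of_pos hkR]
        rw [h5]
        calc |(s x : ℝ)| * (1 / k) ≤ ((k : ℝ) * C + 2) * (1 / k) := by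
              apply mul_le_mul_of_nonneg_right h1 (by positivity)
          _ = ((k : ℝ) * C + 2) / k := by ring
    have hsub : ∫ x, (L x - 2 / k) ∂p = I - 2 / k := by
      rw [integral_sub hLint (integrable_const _), integral_const,
        probReal_univ, one_smul, hI]
    have hmono : ∫ x, (L x - 2 / k) ∂p ≤ ∫ x, Real.log (σf x) ∂p :=
      integral_mono (hLint.sub (integrable_const _)) hσfint hlb
    rw [hsub] at hmono
    have h4 : 4 / (k : ℝ) < I - 2 / k := by
      have : 4 / (k : ℝ) + 2 / k = 6 / k := by ring
      linarith
    linarith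
end

section
/- Let n_x, x ∈ X, be a bounded measurable family of positive integers, X = X₋ ∪ X₊ a measurable partition, q a probability measure on X, and (a_j)_{j∈ℤ} a sequence of non-negative reals. Assume: (a) 0 < S ≤ ∫_{X₋} n_x dq − ∫_{X₊} n_x dq; (b) for every t = 0,…,n: ∫_{X₋} Σ_{j=t+1}^{t+n_x} a_j dq(x) ≤ ∫_{X₊} Σ_{j=t−n_x+1}^{t} a_j dq(x). Let n₋ = sup{n_x : x ∈ X₋} and n₊ = sup{n_x : x ∈ X₊}. Then Σ_{j=1}^{n} a_j ≤ ((n₋+n₊)/S) · Σ_{j=−n₊+1}^{0} a_j. -/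
/-!
Sum hypothesis (b) over `t = 0, …, n` and exchange the order of summation. With
`A = ∑_{j=1}^{n} a_j`, `F(k) = ∑_{j=1}^{k} a_j` and `P = ∑_{j=-n₊+1}^{0} a_j`, the integrand on
the left becomes `∑_{i=1}^{n_x} ∑_{j=i}^{n+i} a_j ≥ n_x A - n₋ F(n_x)` for `x ∈ X₋`, and the one on
the right is at most `n_x (P + A)` for `x ∈ X₊`, since each `a_j` is counted at most `n_x` times.
Integrating gives `(∫_{X₋} n_x - ∫_{X₊} n_x) A ≤ n₋ ∫_{X₋} F(n_x) + P ∫_{X₊} n_x`; finally (b) at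
`t = 0` bounds `∫_{X₋} F(n_x)` by `P`, and `∫_{X₊} n_x ≤ n₊`.
-/

open MeasureTheory Finset

lemma Finset.sum_le_sum_add_sum_of_subset_union {ι R : Type*} [DecidableEq ι]
    [AddCommMonoid R] [PartialOrder R] [IsOrderedAddMonoid R] {f : ι → R} {s t u : Finset ι}
    (hf : ∀ i, 0 ≤ f i) (h : s ⊆ t ∪ u) :
    ∑ i ∈ s, f i ≤ ∑ i ∈ t, f i + ∑ i ∈ u, f i :=
  calc ∑ i ∈ s, f i ≤ ∑ i ∈ t ∪ u, f i := sum_le_sum_of_subset_of_nonneg h fun i _ _ ↦ hf i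
    _ ≤ ∑ i ∈ t ∪ u, f i + ∑ i ∈ t ∩ u, f i :=
      le_add_of_nonneg_right (sum_nonneg fun i _ ↦ hf i)
    _ = ∑ i ∈ t, f i + ∑ i ∈ u, f i := sum_union_inter

lemma sum_range_shift_eq_sum_Icc {M : Type*} [AddCommMonoid M] (a : ℤ → M) (n : ℕ) (i : ℤ) :
    ∑ t ∈ range (n + 1), a (t + i) = ∑ j ∈ Icc i (n + i), a j := by
  have hcard : ((n : ℤ) + i + 1 - i).toNat = n + 1 := by omega
  rw [Int.Icc_eq_finset_map, sum_map, hcard]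
  simp [add_comm i]

/-- Swapping the order of summation turns a family of sliding windows `[t + u, t + v]` into a
family of shifted copies of `[0, n]`. -/
lemma sum_range_sum_Icc_add_eq {M : Type*} [AddCommMonoid M] (a : ℤ → M) (n : ℕ) (u v : ℤ) :
    ∑ t ∈ range (n + 1), ∑ j ∈ Icc ((t : ℤ) + u) (t + v), a j
      = ∑ i ∈ Icc u v, ∑ j ∈ Icc i (n + i), a j := by
  simp_rw [← map_add_left_Icc, sum_map, addLeftEmbedding_apply]
  rw [sum_comm]
  exact sum_congr rfl fun i _ ↦ sum_range_shift_eq_sum_Icc a n i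

noncomputable def forwardWindows (a : ℤ → ℝ) (n k : ℕ) : ℝ :=
  ∑ t ∈ range (n + 1), ∑ j ∈ Icc ((t : ℤ) + 1) (t + k), a j

noncomputable def backwardWindows (a : ℤ → ℝ) (n k : ℕ) : ℝ :=
  ∑ t ∈ range (n + 1), ∑ j ∈ Icc ((t : ℤ) - k + 1) t, a j

section windows

variable {a : ℤ → ℝ} {n m M : ℕ}

/-- For `1 ≤ i ≤ m`, the shifted copy `[i, n + i]` of `[1, n]` misses only indices in `[1, m]`. -/
lemma mul_sub_le_forwardWindows (ha : ∀ j, 0 ≤ a j) (hmM : m ≤ M) :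
    m * ∑ j ∈ Icc 1 (n : ℤ), a j - M * ∑ j ∈ Icc 1 (m : ℤ), a j ≤ forwardWindows a n m := by
  have hshift : ∀ i ∈ Icc (1 : ℤ) m,
      ∑ j ∈ Icc 1 (n : ℤ), a j - ∑ j ∈ Icc 1 (m : ℤ), a j ≤ ∑ j ∈ Icc i (n + i), a j := by
    intro i hi
    rw [mem_Icc] at hi
    rw [sub_le_iff_le_add]
    refine sum_le_sum_add_sum_of_subset_union ha fun j hj ↦ ?_
    simp only [mem_union, mem_Icc] at hj ⊢
    omega
  have hF : 0 ≤ ∑ j ∈ Icc 1 (m : ℤ), a j := sum_nonneg fun j _ ↦ ha j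
  have hM : (m : ℝ) ≤ M := by exact_mod_cast hmM
  calc (m : ℝ) * ∑ j ∈ Icc 1 (n : ℤ), a j - M * ∑ j ∈ Icc 1 (m : ℤ), a j
      ≤ m * (∑ j ∈ Icc 1 (n : ℤ), a j - ∑ j ∈ Icc 1 (m : ℤ), a j) := by nlinarith
    _ ≤ ∑ i ∈ Icc (1 : ℤ) m, ∑ j ∈ Icc i (n + i), a j := by
      simpa using card_nsmul_le_sum _ _ _ hshift
    _ = forwardWindows a n m := (sum_range_sum_Icc_add_eq a n 1 m).symm

lemma backwardWindows_le (ha : ∀ j, 0 ≤ a j) (hmM : m ≤ M) :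
    backwardWindows a n m
      ≤ m * (∑ j ∈ Icc (-(M : ℤ) + 1) 0, a j + ∑ j ∈ Icc 1 (n : ℤ), a j) := by
  have hshift : ∀ i ∈ Icc (-(m : ℤ) + 1) 0, ∑ j ∈ Icc i (n + i), a j
      ≤ ∑ j ∈ Icc (-(M : ℤ) + 1) 0, a j + ∑ j ∈ Icc 1 (n : ℤ), a j := by
    intro i hi
    rw [mem_Icc] at hi
    refine sum_le_sum_add_sum_of_subset_union ha fun j hj ↦ ?_
    simp only [mem_union, mem_Icc] at hj ⊢
    omega
  calc backwardWindows a n m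
      = ∑ i ∈ Icc (-(m : ℤ) + 1) 0, ∑ j ∈ Icc i (n + i), a j := by
        rw [← sum_range_sum_Icc_add_eq, backwardWindows]
        simp only [add_zero, ← add_assoc, sub_eq_add_neg]
    _ ≤ _ := by simpa [mul_add] using sum_le_card_nsmul _ _ _ hshift

end windows

section integrated

variable {X : Type*} [MeasurableSpace X] {q : Measure X} {s : Set X} {f : X → ℕ} {B : ℕ}

lemma integrableOn_comp_of_forall_le {E : Type*} [NormedAddCommGroup E] [IsFiniteMeasure q]
    (hs : MeasurableSet s) (hf : Measurable f) (hB : ∀ x ∈ s, f x ≤ B) (g : ℕ → E) :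
    IntegrableOn (fun x ↦ g (f x)) s q := by
  refine Measure.integrableOn_of_bounded (M := ∑ k ∈ range (B + 1), ‖g k‖) (measure_ne_top q s)
    (StronglyMeasurable.of_discrete.comp_measurable hf).aestronglyMeasurable ?_
  refine (ae_restrict_iff' hs).2 (ae_of_all _ fun x hx ↦ ?_)
  exact single_le_sum (f := fun k ↦ ‖g k‖) (fun k _ ↦ norm_nonneg _)
    (mem_range.2 (Nat.lt_succ_of_le (hB x hx)))

lemma setIntegral_le_of_forall_le [IsProbabilityMeasure q] (hs : MeasurableSet s) {g : X → ℝ}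
    (hg : IntegrableOn g s q) {c : ℝ} (hc : 0 ≤ c) (h : ∀ x ∈ s, g x ≤ c) :
    ∫ x in s, g x ∂q ≤ c :=
  calc ∫ x in s, g x ∂q ≤ ∫ _ in s, c ∂q := setIntegral_mono_on hg integrableOn_const hs h
    _ = q.real s * c := by rw [setIntegral_const, smul_eq_mul]
    _ ≤ c := mul_le_of_le_one_left hc measureReal_le_one
lemma setIntegral_forwardWindows_le [IsFiniteMeasure q] {s' : Set X} {B' n : ℕ} {a : ℤ → ℝ}
    (hs : MeasurableSet s)
    (hs' : MeasurableSet s') (hf : Measurable f) (hB : ∀ x ∈ s, f x ≤ B)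
    (hB' : ∀ x ∈ s', f x ≤ B')
    (h : ∀ t : ℕ, t ≤ n → ∫ x in s, ∑ j ∈ Icc ((t : ℤ) + 1) (t + f x), a j ∂q
      ≤ ∫ x in s', ∑ j ∈ Icc ((t : ℤ) - f x + 1) t, a j ∂q) :
    ∫ x in s, forwardWindows a n (f x) ∂q ≤ ∫ x in s', backwardWindows a n (f x) ∂q := by
  simp only [forwardWindows, backwardWindows]
  rw [integral_finsetSum _ fun (t : ℕ) _ ↦ integrableOn_comp_of_forall_le hs hf hB
      fun k ↦ ∑ j ∈ Icc ((t : ℤ) + 1) (t + k), a j,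
    integral_finsetSum _ fun (t : ℕ) _ ↦ integrableOn_comp_of_forall_le hs' hf hB'
      fun k ↦ ∑ j ∈ Icc ((t : ℤ) - k + 1) t, a j]
  exact sum_le_sum fun t ht ↦ h t (Nat.lt_succ_iff.mp (mem_range.mp ht))

lemma setIntegral_sum_Icc_neg_le [IsProbabilityMeasure q] {a : ℤ → ℝ} (hs : MeasurableSet s)
    (hf : Measurable f) (hB : ∀ x ∈ s, f x ≤ B) (ha : ∀ j, 0 ≤ a j) :
    ∫ x in s, ∑ j ∈ Icc (-(f x : ℤ) + 1) 0, a j ∂q ≤ ∑ j ∈ Icc (-(B : ℤ) + 1) 0, a j := by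
  refine setIntegral_le_of_forall_le hs (integrableOn_comp_of_forall_le hs hf hB
    fun k ↦ ∑ j ∈ Icc (-(k : ℤ) + 1) 0, a j) (sum_nonneg fun j _ ↦ ha j)
    fun x hx ↦ sum_le_sum_of_subset_of_nonneg (fun j hj ↦ ?_) fun j _ _ ↦ ha j
  have := hB x hx
  simp only [mem_Icc] at hj ⊢
  omega

end integrated

theorem stmt2_general {X : Type*} [MeasurableSpace X] (q : Measure X) [IsProbabilityMeasure q]
    (Xm Xp : Set X) (hXm : MeasurableSet Xm) (hXp : MeasurableSet Xp)
    (nx : X → ℕ) (hnmeas : Measurable nx)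
    (nm np : ℕ) (hnm : ∀ x ∈ Xm, nx x ≤ nm) (hnp : ∀ x ∈ Xp, nx x ≤ np)
    (a : ℤ → ℝ) (ha : ∀ j, 0 ≤ a j)
    (S : ℝ) (hS : 0 < S) (n : ℕ)
    (hSa : S ≤ (∫ x in Xm, (nx x : ℝ) ∂q) - ∫ x in Xp, (nx x : ℝ) ∂q)
    (hb : ∀ t : ℕ, t ≤ n →
      (∫ x in Xm, (∑ j ∈ Finset.Icc ((t : ℤ) + 1) ((t : ℤ) + (nx x : ℤ)), a j) ∂q)
        ≤ ∫ x in Xp, (∑ j ∈ Finset.Icc ((t : ℤ) - (nx x : ℤ) + 1) (t : ℤ), a j) ∂q) :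
    (∑ j ∈ Finset.Icc (1 : ℤ) (n : ℤ), a j)
      ≤ ((nm + np : ℝ) / S) * ∑ j ∈ Finset.Icc (-(np : ℤ) + 1) 0, a j := by
  set T := ∑ j ∈ Icc (1 : ℤ) n, a j
  set P := ∑ j ∈ Icc (-(np : ℤ) + 1) 0, a j
  have hT : 0 ≤ T := sum_nonneg fun j _ ↦ ha j
  have hP : 0 ≤ P := sum_nonneg fun j _ ↦ ha j
  have intm := integrableOn_comp_of_forall_le (E := ℝ) (q := q) hXm hnmeas hnm
  have intp := integrableOn_comp_of_forall_le (E := ℝ) (q := q) hXp hnmeas hnp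
  have hlow : ∫ x in Xm, ((nx x : ℝ) * T - nm * ∑ j ∈ Icc 1 (nx x : ℤ), a j) ∂q
      ≤ ∫ x in Xm, forwardWindows a n (nx x) ∂q :=
    setIntegral_mono_on (intm fun k ↦ k * T - nm * ∑ j ∈ Icc 1 (k : ℤ), a j)
      (intm (forwardWindows a n)) hXm fun x hx ↦ mul_sub_le_forwardWindows ha (hnm x hx)
  have hwindows := setIntegral_forwardWindows_le hXm hXp hnmeas hnm hnp hb
  have hup : ∫ x in Xp, backwardWindows a n (nx x) ∂q ≤ ∫ x in Xp, (nx x : ℝ) * (P + T) ∂q :=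
    setIntegral_mono_on (intp (backwardWindows a n)) (intp fun k ↦ k * (P + T)) hXp
      fun x hx ↦ backwardWindows_le ha (hnp x hx)
  have hinitial : ∫ x in Xm, ∑ j ∈ Icc 1 (nx x : ℤ), a j ∂q ≤ P := by
    have h0 := hb 0 n.zero_le
    simp only [Nat.cast_zero, zero_add, zero_sub] at h0
    exact h0.trans (setIntegral_sum_Icc_neg_le hXp hnmeas hnp ha)
  have hmass : ∫ x in Xp, (nx x : ℝ) ∂q ≤ np :=
    setIntegral_le_of_forall_le hXp (intp Nat.cast) (Nat.cast_nonneg _) fun x hx ↦ by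
      exact_mod_cast hnp x hx
  rw [integral_sub (intm fun k ↦ k * T) (intm fun k ↦ nm * ∑ j ∈ Icc 1 (k : ℤ), a j),
    integral_mul_const, integral_const_mul] at hlow
  rw [integral_mul_const] at hup
  rw [div_mul_eq_mul_div, le_div_iff₀ hS]
  nlinarith [mul_le_mul_of_nonneg_left hSa hT, mul_le_mul_of_nonneg_left hinitial nm.cast_nonneg,
    mul_le_mul_of_nonneg_right hmass hP]

/-- Lemma `l.sete`: the main combinatorial estimate. -/
theorem stmt2 {X : Type*} [MeasurableSpace X] (q : Measure X) [IsProbabilityMeasure q]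
    (Xm Xp : Set X) (hXm : MeasurableSet Xm) (hXp : MeasurableSet Xp)
    (hpart : Xm ∪ Xp = Set.univ) (hdisj : Disjoint Xm Xp)
    (nx : X → ℕ) (hnpos : ∀ x, 0 < nx x) (hnmeas : Measurable nx)
    (nm np : ℕ) (hnm : ∀ x ∈ Xm, nx x ≤ nm) (hnp : ∀ x ∈ Xp, nx x ≤ np)
    (a : ℤ → ℝ) (ha : ∀ j, 0 ≤ a j)
    (S : ℝ) (hS : 0 < S) (n : ℕ)
    (hSa : S ≤ (∫ x in Xm, (nx x : ℝ) ∂q) - ∫ x in Xp, (nx x : ℝ) ∂q)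
    (hb : ∀ t : ℕ, t ≤ n →
      (∫ x in Xm, (∑ j ∈ Finset.Icc ((t : ℤ) + 1) ((t : ℤ) + (nx x : ℤ)), a j) ∂q)
        ≤ ∫ x in Xp, (∑ j ∈ Finset.Icc ((t : ℤ) - (nx x : ℤ) + 1) (t : ℤ), a j) ∂q) :
    (∑ j ∈ Finset.Icc (1 : ℤ) (n : ℤ), a j)
      ≤ ((nm + np : ℝ) / S) * ∑ j ∈ Finset.Icc (-(np : ℤ) + 1) 0, a j :=
  stmt2_general q Xm Xp hXm hXp nx hnmeas nm np hnm hnp a ha S hS n hSa hb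
end

section
/- Given β₀, σ₀ ∈ (0,1), set γ₀ = (1−β₀)/100 and choose N₀ ∈ ℕ with σ₀^{N₀−1} ≤ (1−β₀)/100. Let f(z) = λz and g(z) = Λz be linear maps of ℂ with |λ| ≤ β₀|Λ| and |Λ| ≤ σ₀, and let f̃(z) = (az+b)/(cz+d) be a Möbius transformation with max{| |a|/|λ| − 1|, |b|, |c|, ||d| − 1|} < γ₀. Then for every r ∈ [0,1] such that f̃(B(0,r)) is not contained in g(B(0,r)), the sets f̃(g^{N₀}(B(0,r))) and g^{N₀}(B(0,r)) are disjoint. -/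
/-!
On the unit disk the denominator `c z + d` of the deformation stays within `2γ₀` of `1`. If
`f̃` moves some point of `B(0,r)` outside `B(0,|Λ|r)`, then, since `|a| ≈ |λ| ≤ β₀|Λ|`, this
can only be due to the constant term: `|b| > (1 - β₀ - 3γ₀)|Λ|r = 97γ₀|Λ|r`. On the much smaller
disk `B(0,s)`, `s = |Λ|^{N₀} r ≤ γ₀|Λ|r`, the constant term then dominates, so `f̃` maps every
point of `B(0,s)` outside `B(0,s)`.
-/

open Metric

lemma abs_norm_mul_add_sub_one_le {c d z : ℂ} {ε : ℝ} (hc : ‖c‖ ≤ ε) (hd : |‖d‖ - 1| ≤ ε)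
    (hz : ‖z‖ ≤ 1) : |‖c * z + d‖ - 1| ≤ 2 * ε := by
  have hcz : ‖c * z‖ ≤ ε := by
    rw [norm_mul]
    exact (mul_le_of_le_one_right (norm_nonneg c) hz).trans hc
  have hmove : |‖c * z + d‖ - ‖d‖| ≤ ‖c * z‖ := by
    simpa using abs_norm_sub_norm_le (c * z + d) d
  calc |‖c * z + d‖ - 1| = |(‖c * z + d‖ - ‖d‖) + (‖d‖ - 1)| := by ring_nf
    _ ≤ |‖c * z + d‖ - ‖d‖| + |‖d‖ - 1| := abs_add_le _ _
    _ ≤ 2 * ε := by linarith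

lemma sub_mul_lt_norm_of_not_image_closedBall_subset {a b c d : ℂ} {γ κ r ρ : ℝ} (hρ : 0 ≤ ρ)
    (hr : r ≤ 1) (ha : ‖a‖ ≤ κ) (hc : ‖c‖ ≤ γ) (hd : |‖d‖ - 1| ≤ γ)
    (hesc : ¬ ((fun z : ℂ => (a * z + b) / (c * z + d)) '' closedBall 0 r ⊆ closedBall 0 ρ)) :
    ρ * (1 - 2 * γ) - κ * r < ‖b‖ := by
  obtain ⟨_, ⟨z, hz, rfl⟩, hout⟩ := Set.not_subset.mp hesc
  rw [mem_closedBall, dist_zero_right] at hz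
  rw [mem_closedBall, dist_zero_right, not_le, norm_div] at hout
  have hw : 0 < ‖c * z + d‖ := by
    by_contra! h
    rw [norm_le_zero_iff.mp h, norm_zero, div_zero] at hout
    linarith
  have hnum : ρ * ‖c * z + d‖ < ‖a * z + b‖ := (lt_div_iff₀ hw).mp hout
  have haz : ‖a * z‖ ≤ κ * r := by
    rw [norm_mul]
    exact mul_le_mul ha hz (norm_nonneg z) ((norm_nonneg a).trans ha)
  calc ρ * (1 - 2 * γ) - κ * r ≤ ρ * ‖c * z + d‖ - ‖a * z‖ := by
        gcongr
        linarith [(abs_le.mp (abs_norm_mul_add_sub_one_le hc hd (hz.trans hr))).1]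
    _ < ‖a * z + b‖ - ‖a * z‖ := by linarith
    _ ≤ ‖b‖ := by linarith [norm_add_le (a * z) b]

lemma disjoint_image_closedBall_self {a b c d : ℂ} {γ s : ℝ} (hγ : γ ≤ 1 / 3) (hs : s ≤ 1)
    (ha : ‖a‖ ≤ 1 + γ) (hc : ‖c‖ ≤ γ) (hd : |‖d‖ - 1| ≤ γ) (hb : 3 * s < ‖b‖) :
    Disjoint ((fun z : ℂ => (a * z + b) / (c * z + d)) '' closedBall 0 s) (closedBall 0 s) := by
  rw [Set.disjoint_left]
  rintro _ ⟨z, hz, rfl⟩ hin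
  rw [mem_closedBall, dist_zero_right] at hz
  rw [mem_closedBall, dist_zero_right, norm_div] at hin
  have hs0 : 0 ≤ s := (norm_nonneg z).trans hz
  obtain ⟨hw, hwM⟩ := abs_le.mp (abs_norm_mul_add_sub_one_le hc hd (hz.trans hs))
  have haz : ‖a * z‖ ≤ (1 + γ) * s := by
    rw [norm_mul]
    exact mul_le_mul ha hz (norm_nonneg z) ((norm_nonneg a).trans ha)
  have hnum : ‖a * z + b‖ ≤ s * ‖c * z + d‖ := (div_le_iff₀ (by linarith)).mp hin
  have hsw : s * ‖c * z + d‖ ≤ s * (1 + 2 * γ) := mul_le_mul_of_nonneg_left (by linarith) hs0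
  have htri : ‖b‖ ≤ ‖a * z + b‖ + ‖a * z‖ := by simpa using norm_sub_le (a * z + b) (a * z)
  nlinarith

lemma pow_le_mul_self_of_pow_pred_le {L σ γ : ℝ} {N : ℕ} (hγ : γ < 1) (hL : 0 ≤ L)
    (hLσ : L ≤ σ) (hσγ : σ ^ (N - 1) ≤ γ) : L ^ N ≤ γ * L := by
  obtain _ | n := N
  · rw [zero_tsub, pow_zero] at hσγ
    linarith
  calc L ^ (n + 1) = L ^ n * L := pow_succ L n
    _ ≤ σ ^ n * L := by gcongr
    _ ≤ γ * L := mul_le_mul_of_nonneg_right hσγ hL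

lemma le_one_add_mul_of_abs_div_sub_one_le {x l γ : ℝ} (hl : 0 < l) (h : |x / l - 1| ≤ γ) :
    x ≤ (1 + γ) * l := by
  have := (div_le_iff₀ hl).mp (by linarith [(abs_le.mp h).2] : x / l ≤ 1 + γ)
  linarith

theorem stmt5_general (β₀ σ₀ : ℝ) (hβ : β₀ ∈ Set.Ioo (0:ℝ) 1) (hσ : σ₀ ∈ Set.Ioo (0:ℝ) 1)
    (N₀ : ℕ) (hN : σ₀ ^ (N₀ - 1) ≤ (1 - β₀) / 100)
    (lam Lam a b c d : ℂ) (hlam : lam ≠ 0)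
    (h1 : ‖lam‖ ≤ β₀ * ‖Lam‖) (h2 : ‖Lam‖ ≤ σ₀)
    (hdefa : |‖a‖ / ‖lam‖ - 1| < (1 - β₀) / 100)
    (hdefc : ‖c‖ < (1 - β₀) / 100)
    (hdefd : |‖d‖ - 1| < (1 - β₀) / 100)
    (r : ℝ) (hr : r ∈ Set.Icc (0:ℝ) 1)
    (hnot : ¬ ((fun z : ℂ => (a * z + b) / (c * z + d)) '' Metric.closedBall 0 r
        ⊆ Metric.closedBall 0 (‖Lam‖ * r))) :
    Disjoint
      ((fun z : ℂ => (a * z + b) / (c * z + d)) ''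
        Metric.closedBall (0:ℂ) (‖Lam‖ ^ N₀ * r))
      (Metric.closedBall (0:ℂ) (‖Lam‖ ^ N₀ * r)) := by
  obtain ⟨hβ0, hβ1⟩ := hβ
  obtain ⟨hr0, hr1⟩ := hr
  set γ := (1 - β₀) / 100 with hγ
  set L := ‖Lam‖
  have hγ0 : 0 < γ := by linarith
  have hL1 : L ≤ 1 := h2.trans hσ.2.le
  have ha : ‖a‖ ≤ (1 + γ) * (β₀ * L) :=
    (le_one_add_mul_of_abs_div_sub_one_le (norm_pos_iff.mpr hlam) hdefa.le).trans
      (by gcongr)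
  have hb := sub_mul_lt_norm_of_not_image_closedBall_subset (by positivity) hr1 ha hdefc.le
    hdefd.le hnot
  have hs : L ^ N₀ * r ≤ γ * (L * r) := by
    rw [← mul_assoc]
    exact mul_le_mul_of_nonneg_right
      (pow_le_mul_self_of_pow_pred_le (by linarith) (norm_nonneg _) h2 hN) hr0
  refine disjoint_image_closedBall_self (γ := γ) (by linarith)
    (mul_le_one₀ (pow_le_one₀ (norm_nonneg _) hL1) hr0 hr1) (ha.trans
      (mul_le_of_le_one_right (by linarith) (mul_le_one₀ hβ1.le (norm_nonneg _) hL1)))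
    hdefc.le hdefd.le (lt_of_le_of_lt ?_ hb)
  have hmargin : L * r * (1 - 2 * γ) - (1 + γ) * (β₀ * L) * r = γ * (L * r) * (98 - β₀) := by
    rw [hγ]; ring
  rw [hmargin]
  nlinarith [mul_nonneg (by positivity : 0 ≤ γ * (L * r)) (by linarith : 0 ≤ 95 - β₀)]

/-- Lemma `l.aproximacao`: if `f̃` is a `γ₀`-deformation of `f(z)=λz`, `|λ| ≤ β₀|Λ|`,
`|Λ| ≤ σ₀`, `γ₀ = (1−β₀)/100`, `σ₀^{N₀−1} ≤ (1−β₀)/100`, and `f̃(B(0,r)) ⊄ g(B(0,r))`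
for some `r ∈ [0,1]` (where `g(z)=Λz`), then `f̃(g^{N₀}(B(0,r)))` and `g^{N₀}(B(0,r))`
are disjoint. Here `g^{N₀}(B(0,r)) = B(0,|Λ|^{N₀} r)`. -/
theorem stmt5 (β₀ σ₀ : ℝ) (hβ : β₀ ∈ Set.Ioo (0:ℝ) 1) (hσ : σ₀ ∈ Set.Ioo (0:ℝ) 1)
    (N₀ : ℕ) (hN : σ₀ ^ (N₀ - 1) ≤ (1 - β₀) / 100)
    (lam Lam a b c d : ℂ) (hlam : lam ≠ 0)
    (h1 : ‖lam‖ ≤ β₀ * ‖Lam‖) (h2 : ‖Lam‖ ≤ σ₀)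
    (hdefa : |‖a‖ / ‖lam‖ - 1| < (1 - β₀) / 100)
    (hdefb : ‖b‖ < (1 - β₀) / 100)
    (hdefc : ‖c‖ < (1 - β₀) / 100)
    (hdefd : |‖d‖ - 1| < (1 - β₀) / 100)
    (r : ℝ) (hr : r ∈ Set.Icc (0:ℝ) 1)
    (hnot : ¬ ((fun z : ℂ => (a * z + b) / (c * z + d)) '' Metric.closedBall 0 r
        ⊆ Metric.closedBall 0 (‖Lam‖ * r))) :
    Disjoint
      ((fun z : ℂ => (a * z + b) / (c * z + d)) ''
        Metric.closedBall (0:ℂ) (‖Lam‖ ^ N₀ * r))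
      (Metric.closedBall (0:ℂ) (‖Lam‖ ^ N₀ * r)) :=
  stmt5_general β₀ σ₀ hβ hσ N₀ hN lam Lam a b c d hlam h1 h2 hdefa hdefc hdefd r hr hnot
end

section
/- Let f̃(z) = (az+b)/(cz+d) be a Möbius transformation with b = 0 and max{||a|/|λ| − 1|, |c|, ||d|−1|} < γ₀, where γ₀ = (1−β₀)/100, |λ| ≤ β₀|Λ|, and β₀ ∈ (0,1). Then for every z with |z| ≤ 1, |f̃(z)| ≤ |Λ z|; in particular f̃(B(0,r)) ⊂ B(0,|Λ|r) for all r ≤ 1. -/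
/-!
Since `|c| < γ₀` and `|d| > 1 - γ₀`, the denominator satisfies `|cz + d| ≥ 1 - 2γ₀` on the unit
disk, while `|a| ≤ (1 + γ₀)|λ| ≤ (1 + γ₀)β₀|Λ|`. So `|f̃(z)| ≤ (1 + γ₀)β₀/(1 - 2γ₀) · |Λ z|`, and
the constant is at most `1` because `1 - 2γ₀ - (1 + γ₀)β₀ = (1 - β₀)(98 - β₀)/100 ≥ 0`.
-/

lemma norm_sub_norm_mul_le_norm_mul_add {𝕜 : Type*} [NormedDivisionRing 𝕜] (c z d : 𝕜) :
    ‖d‖ - ‖c‖ * ‖z‖ ≤ ‖c * z + d‖ := by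
  have : ‖d‖ ≤ ‖c * z + d‖ + ‖c * z‖ :=
    calc ‖d‖ = ‖(c * z + d) - c * z‖ := by rw [add_sub_cancel_left]
      _ ≤ ‖c * z + d‖ + ‖c * z‖ := norm_sub_le _ _
  rw [norm_mul] at this
  linarith

lemma norm_mul_div_mul_add_le {𝕜 : Type*} [NormedDivisionRing 𝕜] {a c d z : 𝕜} {L : ℝ}
    (hcz : ‖c‖ * ‖z‖ < ‖d‖) (ha : ‖a‖ ≤ L * (‖d‖ - ‖c‖ * ‖z‖)) :
    ‖a * z / (c * z + d)‖ ≤ L * ‖z‖ := by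
  have hden := norm_sub_norm_mul_le_norm_mul_add c z d
  have hden_pos : 0 < ‖c * z + d‖ := by linarith
  have hL : 0 ≤ L := nonneg_of_mul_nonneg_left ((norm_nonneg a).trans ha) (by linarith)
  rw [norm_div, norm_mul, div_le_iff₀ hden_pos]
  calc ‖a‖ * ‖z‖ ≤ L * (‖d‖ - ‖c‖ * ‖z‖) * ‖z‖ := by gcongr
    _ ≤ L * ‖z‖ * ‖c * z + d‖ := by
      rw [mul_right_comm]
      exact mul_le_mul_of_nonneg_left hden (by positivity)

lemma le_one_add_mul_of_abs_div_sub_one_lt {x y γ : ℝ} (hy : 0 < y) (h : |x / y - 1| < γ) :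
    x ≤ (1 + γ) * y := by
  have := (abs_lt.mp h).2
  rw [sub_lt_iff_lt_add', div_lt_iff₀ hy] at this
  exact this.le

lemma one_add_mul_le_one_sub_two_mul {β : ℝ} (hβ : β < 1) :
    (1 + (1 - β) / 100) * β ≤ 1 - 2 * ((1 - β) / 100) := by
  nlinarith

/-- Fixed-point-at-zero case: a `γ₀`-deformation `f̃(z)=az/(cz+d)` of `f(z)=λz` with
`b = 0`, `γ₀ = (1−β₀)/100`, `|λ| ≤ β₀|Λ|`, satisfies `|f̃(z)| ≤ |Λz|` for `|z| ≤ 1`;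
in particular `f̃(B(0,r)) ⊆ B(0,|Λ|r)` for all `r ≤ 1`. -/
theorem stmt7 (β₀ : ℝ) (hβ : β₀ ∈ Set.Ioo (0:ℝ) 1)
    (lam Lam a c d : ℂ) (hlam : lam ≠ 0)
    (h1 : ‖lam‖ ≤ β₀ * ‖Lam‖)
    (hdefa : |‖a‖ / ‖lam‖ - 1| < (1 - β₀) / 100)
    (hdefc : ‖c‖ < (1 - β₀) / 100)
    (hdefd : |‖d‖ - 1| < (1 - β₀) / 100) :
    (∀ z : ℂ, ‖z‖ ≤ 1 →
      ‖(a * z) / (c * z + d)‖ ≤ ‖Lam * z‖)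
    ∧ ∀ r : ℝ, r ≤ 1 →
      (fun z : ℂ => (a * z) / (c * z + d)) '' Metric.closedBall 0 r
        ⊆ Metric.closedBall 0 (‖Lam‖ * r) := by
  set γ := (1 - β₀) / 100 with hγ_def
  have hγ : 0 < γ := by linarith [hβ.2]
  have hγ_small : 2 * γ < 1 := by linarith [hβ.1]
  have ha : ‖a‖ ≤ (1 - 2 * γ) * ‖Lam‖ :=
    calc ‖a‖ ≤ (1 + γ) * ‖lam‖ :=
          le_one_add_mul_of_abs_div_sub_one_lt (norm_pos_iff.mpr hlam) hdefa
      _ ≤ (1 + γ) * β₀ * ‖Lam‖ := by rw [mul_assoc]; gcongr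
      _ ≤ (1 - 2 * γ) * ‖Lam‖ := by gcongr; exact one_add_mul_le_one_sub_two_mul hβ.2
  have hmain (z : ℂ) (hz : ‖z‖ ≤ 1) : ‖a * z / (c * z + d)‖ ≤ ‖Lam‖ * ‖z‖ := by
    have hd := (abs_lt.mp hdefd).1
    have hcz : ‖c‖ * ‖z‖ ≤ γ := 
      (mul_le_of_le_one_right (norm_nonneg c) hz).trans hdefc.le
    refine norm_mul_div_mul_add_le (by linarith) (ha.trans ?_)
    rw [mul_comm]
    exact mul_le_mul_of_nonneg_left (by linarith) (norm_nonneg Lam)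
  refine ⟨fun z hz => (norm_mul Lam z).symm ▸ hmain z hz, ?_⟩
  rintro r hr _ ⟨z, hz, rfl⟩
  rw [mem_closedBall_zero_iff] at hz ⊢
  exact (hmain z (hz.trans hr)).trans (by gcongr)
end

section
/- Let p be a probability measure and define Γ(z,ρ) ⊂ X₀ for z ∈ ℂ, ρ ≥ 0 as a family of measurable sets satisfying: Γ(z,0) = ∩_{ρ>0} Γ(z,ρ), Γ(z,r) ⊂ Γ(z',r') whenever B(z,r) ⊂ B(z',r'), and p(Γ(z,0)) < β₀ for all z ∈ B(0,1). Then ϱ := inf{r > 0 : p(Γ(z,r)) > β₀ for some z ∈ B(0,1)} is strictly positive. -/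
open MeasureTheory
open scoped ENNReal

/-- Positivity of `ϱ = inf{r > 0 : p(Γ(z,r)) > β₀ for some z ∈ B(0,1)}` in
Lemma `l.zzero`: stated as the existence of `ϱ > 0` below which no radius works. -/
theorem stmt9 {X₀ : Type*} [MeasurableSpace X₀] (p : Measure X₀) [IsFiniteMeasure p]
    (β₀ : ℝ≥0∞) (hβ : 0 < β₀)
    (Γ : ℂ → ℝ → Set X₀)
    (hΓmeas : ∀ z r, MeasurableSet (Γ z r))
    (hΓ0 : ∀ z, Γ z 0 = ⋂ ρ > (0:ℝ), Γ z ρ)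
    (hmono : ∀ z r z' r', Metric.closedBall z r ⊆ Metric.closedBall z' r' →
      Γ z r ⊆ Γ z' r')
    (hsmall : ∀ z ∈ Metric.closedBall (0:ℂ) 1, p (Γ z 0) < β₀) :
    ∃ ϱ > (0:ℝ), ∀ r : ℝ, 0 < r → r < ϱ →
      ∀ z ∈ Metric.closedBall (0:ℂ) 1, p (Γ z r) ≤ β₀ := by
  classical
  -- Step 1: for each z in the ball, find ρ z > 0 with p (Γ z (ρ z)) ≤ β₀.
  have key : ∀ z ∈ Metric.closedBall (0:ℂ) 1, ∃ ρ > (0:ℝ), p (Γ z ρ) ≤ β₀ := by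
    intro z hz
    set s : ℕ → Set X₀ := fun n => Γ z (1 / (n + 1)) with hs
    have hpos : ∀ n : ℕ, (0:ℝ) < 1 / (n + 1) := by
      intro n; positivity
    have hanti : Antitone s := by
      intro m n hmn
      apply hmono
      apply Metric.closedBall_subset_closedBall
      have h1 : (0:ℝ) < (m:ℝ) + 1 := by positivity
      rw [div_le_div_iff₀ (by positivity) h1]
      have : (m:ℝ) ≤ n := by exact_mod_cast hmn
      nlinarith
    have hiInter : ⋂ n, s n = Γ z 0 := by
      rw [hΓ0 z]
      apply Set.Subset.antisymm
      · intro x hx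
        simp only [Set.mem_iInter] at hx ⊢
        intro ρ hρ
        obtain ⟨n, hn⟩ := exists_nat_gt (1 / ρ)
        have hn1 : 1 / ((n:ℝ) + 1) ≤ ρ := by
          rw [div_le_iff₀ (by positivity)]
          rw [div_lt_iff₀ hρ] at hn
          nlinarith
        exact hmono z (1 / (n + 1)) z ρ
          (Metric.closedBall_subset_closedBall hn1) (hx n)
      · intro x hx
        simp only [Set.mem_iInter] at hx ⊢
        intro n
        exact hx _ (hpos n)
    have htend : Filter.Tendsto (p ∘ s) Filter.atTop (nhds (p (Γ z 0))) := by
      rw [← hiInter]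
      exact tendsto_measure_iInter_atTop (fun n => (hΓmeas _ _).nullMeasurableSet)
        hanti ⟨0, (measure_lt_top p _).ne⟩
    obtain ⟨n, hn⟩ := (htend.eventually_lt_const (hsmall z hz)).exists
    exact ⟨1 / (n + 1), hpos n, hn.le⟩
  choose! ρ hρpos hρle using key
  -- Step 2: compactness — cover the ball by balls of radius ρ z / 2.
  have hcompact : IsCompact (Metric.closedBall (0:ℂ) 1) := isCompact_closedBall 0 1
  obtain ⟨t, ht, htfin, hcover⟩ := hcompact.elim_finite_subcover_image
    (ι := ℂ) (fun z hz => Metric.isOpen_ball (x := z) (ε := ρ z / 2))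
    (by
      intro z hz
      refine Set.mem_iUnion₂.2 ⟨z, hz, ?_⟩
      exact Metric.mem_ball_self (by linarith [hρpos z hz]))
  have hte : htfin.toFinset.Nonempty := by
    have h0 : (0:ℂ) ∈ Metric.closedBall (0:ℂ) 1 := Metric.mem_closedBall_self zero_le_one
    obtain ⟨w, hwt, _⟩ := Set.mem_iUnion₂.1 (hcover h0)
    exact ⟨w, htfin.mem_toFinset.2 hwt⟩
  · refine ⟨htfin.toFinset.inf' hte (fun z => ρ z / 2), ?_, ?_⟩
    · apply (Finset.lt_inf'_iff hte).2
      intro z hz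
      have := hρpos z (ht (htfin.mem_toFinset.1 hz))
      linarith
    · intro r hr hrϱ z hz
      obtain ⟨w, hwt, hzw⟩ := Set.mem_iUnion₂.1 (hcover hz)
      have hwmem : w ∈ Metric.closedBall (0:ℂ) 1 := ht hwt
      have hρw := hρpos w hwmem
      have hrle : r ≤ ρ w / 2 :=
        le_of_lt (lt_of_lt_of_le hrϱ (Finset.inf'_le _ (htfin.mem_toFinset.2 hwt)))
      have hsub : Metric.closedBall z r ⊆ Metric.closedBall w (ρ w) := by
        intro y hy
        simp only [Metric.mem_closedBall] at hy ⊢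
        have hzw' : dist z w < ρ w / 2 := Metric.mem_ball.1 hzw
        calc dist y w ≤ dist y z + dist z w := dist_triangle y z w
          _ ≤ ρ w / 2 + ρ w / 2 := by linarith
          _ = ρ w := by ring
      calc p (Γ z r) ≤ p (Γ w (ρ w)) := measure_mono (hmono z r w (ρ w) hsub)
        _ ≤ β₀ := hρle w hwmem
end

section
/- Let (T_x)_{x∈X} be a measurable family of measurable bijections of a space Y, q a probability measure on X, and η a probability measure on Y satisfying the stationarity equation η = ∫ (T_x)_* η dq(x). Suppose η has atoms, and let z₁,…,z_N be the atoms of maximal mass a. If for a positive q-measure set of x one has {T_x^{-1}(z₁),…,T_x^{-1}(z_N)} ≠ {z₁,…,z_N}, then there exists z ∉ {z₁,…,z_N} with η({z}) = a — a contradiction with maximality. Hence if no finite set is invariant under T_x for q-a.e. x, then every stationary measure η is non-atomic. -/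
/-!
Let `a` be the largest mass of an atom of `η` (atoms of mass `≥ ε > 0` are finitely many, so the
supremum is attained) and `F` the finite set of atoms of mass `a`. For `y ∈ F`, stationarity
writes `a = η {y}` as the `q`-average of the masses `η (T x ⁻¹' {y})`, each of which is an atom
and hence `≤ a`; so `T x ⁻¹' {y}` is an atom of mass `a` for `q`-a.e. `x`. Thus `T x ⁻¹' F ⊆ F`
a.e., and since `T x` is a bijection and `F` is finite, `T x ⁻¹' F = F` a.e.
-/

open MeasureTheory ENNReal

namespace MeasureTheory.Measure

variable {Y : Type*} [MeasurableSpace Y] [MeasurableSingletonClass Y]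
  (η : Measure Y) [IsFiniteMeasure η]

theorem finite_setOf_le_measure_singleton {ε : ℝ≥0∞} (hε : ε ≠ 0) :
    {z : Y | ε ≤ η {z}}.Finite := by
  by_contra hinf
  exact measure_ne_top η _ (Set.Infinite.meas_eq_top hinf ⟨ε, hε, fun _ hz => hz⟩)

theorem exists_forall_measure_singleton_le {y₀ : Y} (hy₀ : η {y₀} ≠ 0) :
    ∃ z, ∀ y, η {y} ≤ η {z} := by
  obtain ⟨z, hz, hzmax⟩ := Set.exists_max_image _ (fun y => η {y})
    (finite_setOf_le_measure_singleton η hy₀) ⟨y₀, le_refl (η {y₀})⟩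
  refine ⟨z, fun y => ?_⟩
  by_cases hy : η {y₀} ≤ η {y}
  · exact hzmax y hy
  · exact (not_le.mp hy).le.trans hz

end MeasureTheory.Measure

theorem MeasureTheory.ae_eq_of_le_of_lintegral_eq {α : Type*} [MeasurableSpace α]
    {μ : Measure α} [IsProbabilityMeasure μ] {f : α → ℝ≥0∞} {c : ℝ≥0∞} (hc : c ≠ ∞)
    (hle : ∀ x, f x ≤ c) (hint : ∫⁻ x, f x ∂μ = c) : ∀ᵐ x ∂μ, f x = c :=
  ae_eq_of_ae_le_of_lintegral_le (ae_of_all μ hle) (hint ▸ hc) aemeasurable_const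
    (by rw [lintegral_const, measure_univ, mul_one, hint])

theorem Function.Bijective.preimage_eq_of_preimage_subset {α : Type*} {f : α → α}
    (hf : f.Bijective) {s : Set α} (hs : s.Finite) (hsub : f ⁻¹' s ⊆ s) : f ⁻¹' s = s :=
  Set.eq_of_subset_of_ncard_le hsub
    (Set.ncard_preimage_of_injective_subset_range hf.1 (by simp [hf.2.range_eq])).ge hs

theorem stmt11_general {X Y : Type*} [MeasurableSpace X] [MeasurableSpace Y]
    [MeasurableSingletonClass Y]
    (q : Measure X) [IsProbabilityMeasure q]
    (T : X → Y → Y) (hTbij : ∀ x, Function.Bijective (T x))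
    (η : Measure Y) [IsProbabilityMeasure η]
    (hstat : ∀ E : Set Y, MeasurableSet E → η E = ∫⁻ x, η (T x ⁻¹' E) ∂q)
    (hnofin : ∀ F : Finset Y, F.Nonempty →
      ¬ (∀ᵐ x ∂q, T x ⁻¹' (F : Set Y) = (F : Set Y))) :
    ∀ y : Y, η {y} = 0 := by
  intro y₀
  by_contra hy₀
  obtain ⟨z₀, hz₀⟩ := η.exists_forall_measure_singleton_le hy₀
  set a := η {z₀}
  set F := {z : Y | η {z} = a}
  have hFfin : F.Finite := (η.finite_setOf_le_measure_singleton
    ((pos_iff_ne_zero.2 hy₀).trans_le (hz₀ y₀)).ne').subset fun _ hz => hz.ge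
  have hpre : ∀ x z, T x ⁻¹' {T x z} = {z} := fun x z => by
    rw [← Set.image_singleton, Set.preimage_image_eq _ (hTbij x).1]
  have hmax : ∀ y ∈ F, ∀ᵐ x ∂q, η (T x ⁻¹' {y}) = a := fun y hy =>
    ae_eq_of_le_of_lintegral_eq (measure_ne_top η _)
      (fun x => by obtain ⟨z, rfl⟩ := (hTbij x).2 y; rw [hpre]; exact hz₀ z)
      ((hstat {y} (measurableSet_singleton y)).symm.trans hy)
  refine hnofin hFfin.toFinset ⟨z₀, hFfin.mem_toFinset.2 rfl⟩ ?_
  rw [Set.Finite.coe_toFinset]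
  filter_upwards [hFfin.eventually_all.2 hmax] with x hx
  refine (hTbij x).preimage_eq_of_preimage_subset hFfin fun z hz => ?_
  have hz' := hx (T x z) hz
  rwa [hpre] at hz'

/-- Lemma `l.nonatomicmeasure` (abstract form): if `η` is a stationary measure for a
measurable family of bijections `(T_x)` and no finite nonempty set is invariant under
`T_x` for `q`-a.e. `x`, then `η` is non-atomic. -/
theorem stmt11 {X Y : Type*} [MeasurableSpace X] [MeasurableSpace Y]
    [MeasurableSingletonClass Y]
    (q : Measure X) [IsProbabilityMeasure q]
    (T : X → Y → Y) (hTbij : ∀ x, Function.Bijective (T x))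
    (hTmeas : Measurable fun p : X × Y => T p.1 p.2)
    (η : Measure Y) [IsProbabilityMeasure η]
    (hstat : ∀ E : Set Y, MeasurableSet E → η E = ∫⁻ x, η (T x ⁻¹' E) ∂q)
    (hnofin : ∀ F : Finset Y, F.Nonempty →
      ¬ (∀ᵐ x ∂q, T x ⁻¹' (F : Set Y) = (F : Set Y))) :
    ∀ y : Y, η {y} = 0 :=
  stmt11_general q T hTbij η hstat hnofin
end

section
/- Let A₁ = diag(σ, σ^{-1}) with σ > 1 and A₂ the rotation by π/2 (matrix [[0,−1],[1,0]]) in SL(2,ℝ), and consider the i.i.d. random matrix product with probabilities (p₁, p₂), p₂ > 0. Then both Lyapunov exponents vanish: λ₊ = λ₋ = 0. In particular, since λ₊(A,(1,0)) = log σ > 0, the Lyapunov exponents are discontinuous at the degenerate probability vector (1,0). -/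
open Filter

noncomputable section

/-!
Write `D e = diag(σ^e, σ^{-e})` and `R` for the rotation. Since `D e * R = R * D (-e)`, every
product `Lⁿ` of `n` letters equals `U * D eₙ` with `U` orthogonal, where `eₙ` is the random walk
on `ℤ` that moves `e ↦ e + 1` on the letter `A₁` and `e ↦ -e` on the letter `A₂`; hence
`‖Lⁿ‖ = ‖(Lⁿ)⁻¹‖ = σ^|eₙ|`. The walk has no drift: `p₂ e² + p₁ e` grows in expectation by exactly
`p₁` per step, so `E[eₙ²] = O(n)` and `E|eₙ| = O(√n) = o(n)`.
-/

namespace KiferExample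

open Matrix
open scoped Matrix.Norms.L2Operator

section Bernoulli

variable {α β : Type*} [Fintype α] (p : α → ℝ)

lemma sum_prod_mul_cons {n : ℕ} (f : (Fin (n + 1) → α) → ℝ) :
    ∑ w, (∏ i, p (w i)) * f w
      = ∑ x, p x * ∑ w : Fin n → α, (∏ i, p (w i)) * f (Fin.cons x w) := by
  rw [← (Fin.consEquiv fun _ => α).sum_comp]
  simp only [Fintype.sum_prod_type, Fin.prod_univ_succ, Finset.mul_sum, mul_assoc]
  rfl

lemma sum_prod_eq_one (hp : ∑ x, p x = 1) (n : ℕ) : ∑ w : Fin n → α, ∏ i, p (w i) = 1 := by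
  rw [← Fintype.prod_sum]
  simp [hp]

/-- `(List.ofFn w).foldr step b₀` is the Markov chain driven by the i.i.d. letters of `w`. -/
theorem sum_prod_mul_foldr (hp : ∑ x, p x = 1) (step : α → β → β) (b₀ : β) (F : β → ℝ) (c : ℝ)
    (hF : ∀ b, ∑ x, p x * F (step x b) = F b + c) (n : ℕ) :
    ∑ w : Fin n → α, (∏ i, p (w i)) * F ((List.ofFn w).foldr step b₀) = F b₀ + n * c := by
  induction n with
  | zero => simp
  | succ n ih =>
    simp only [sum_prod_mul_cons, List.ofFn_cons, List.foldr_cons, Finset.mul_sum]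
    rw [Finset.sum_comm]
    simp only [mul_left_comm (p _), ← Finset.mul_sum, hF, mul_add, Finset.sum_add_distrib,
      ← Finset.sum_mul, ih, sum_prod_eq_one p hp]
    push_cast
    ring

end Bernoulli

lemma tendsto_div_natCast_of_sq_le {b : ℕ → ℝ} {C : ℝ} (hb : ∀ n, 0 ≤ b n)
    (h : ∀ n, b n ^ 2 ≤ C * n) : Tendsto (fun n => b n / n) atTop (nhds 0) := by
  have hC : Tendsto (fun n : ℕ => √(C / n)) atTop (nhds 0) := by
    simpa using (tendsto_const_div_atTop_nhds_zero_nat C).sqrt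
  refine squeeze_zero (fun n => div_nonneg (hb n) n.cast_nonneg) (fun n => ?_) hC
  rcases n.eq_zero_or_pos with rfl | hn
  · simp
  · apply Real.le_sqrt_of_sq_le
    rw [div_pow, div_le_div_iff₀ (by positivity) (by positivity)]
    nlinarith [h n]

section Walk

def step : Fin 2 → ℤ → ℤ
  | 0, e => e + 1
  | 1, e => -e

def walk {n : ℕ} (w : Fin n → Fin 2) : ℤ := (List.ofFn w).foldr step 0

@[simp]
lemma walk_cons {n : ℕ} (x : Fin 2) (w : Fin n → Fin 2) :
    walk (Fin.cons x w : Fin (n + 1) → Fin 2) = step x (walk w) := by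
  simp [walk]

lemma abs_walk_le {n : ℕ} (w : Fin n → Fin 2) : |walk w| ≤ n := by
  induction n with
  | zero => simp [walk]
  | succ n ih =>
    induction w using Fin.consCases with
    | cons x w =>
      rw [walk_cons, Nat.cast_succ]
      match x with
      | 0 => exact (abs_add_le _ _).trans (by simpa using ih w)
      | 1 => exact (abs_neg (walk w)).trans_le ((ih w).trans (by omega))

lemma walk_const_zero (n : ℕ) : walk (fun _ : Fin n => (0 : Fin 2)) = n := by
  induction n with
  | zero => rfl
  | succ n ih =>
    rw [← Fin.cons_self_tail (fun _ => (0 : Fin 2)), walk_cons, Nat.cast_succ, ← ih]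
    rfl

variable {p : Fin 2 → ℝ}

lemma sum_prod_mul_walk_moment (hp1 : p 0 + p 1 = 1) (n : ℕ) :
    ∑ w : Fin n → Fin 2, (∏ i, p (w i)) * (p 1 * (walk w : ℝ) ^ 2 + p 0 * walk w) = n * p 0 := by
  have hp : ∑ x, p x = 1 := by rwa [Fin.sum_univ_two]
  have hdrift : ∀ e : ℤ, ∑ x, p x * (p 1 * (step x e : ℝ) ^ 2 + p 0 * step x e)
      = p 1 * (e : ℝ) ^ 2 + p 0 * e + p 0 := by
    intro e
    simp only [Fin.sum_univ_two, step]
    push_cast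
    linear_combination (p 1 * (e : ℝ) ^ 2 + p 0 * e + p 0) * hp1
  simpa [walk] using
    sum_prod_mul_foldr p hp step 0 (fun e : ℤ => p 1 * (e : ℝ) ^ 2 + p 0 * e) (p 0) hdrift n

lemma sq_sum_prod_mul_abs_walk_le (hp0 : ∀ i, 0 ≤ p i) (hp1 : p 0 + p 1 = 1) (hp2 : 0 < p 1)
    (n : ℕ) : (∑ w : Fin n → Fin 2, (∏ i, p (w i)) * |(walk w : ℝ)|) ^ 2 ≤ 2 / p 1 * n := by
  set μ : (Fin n → Fin 2) → ℝ := fun w => ∏ i, p (w i)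
  have hμ : ∀ w, 0 ≤ μ w := fun w => Finset.prod_nonneg fun i _ => hp0 _
  have hμ1 : ∑ w, μ w = 1 := sum_prod_eq_one p (by rwa [Fin.sum_univ_two]) n
  set b := ∑ w, μ w * |(walk w : ℝ)|
  have hCS : b ^ 2 ≤ ∑ w, μ w * (walk w : ℝ) ^ 2 := by
    have := Finset.sum_sq_le_sum_mul_sum_of_sq_le_mul Finset.univ (fun w _ => hμ w)
      (fun w _ => mul_nonneg (hμ w) (sq_nonneg (walk w : ℝ)))
      (r := fun w => μ w * |(walk w : ℝ)|) (fun w _ => le_of_eq (by rw [mul_pow, sq_abs]; ring))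
    rwa [hμ1, one_mul] at this
  have hmean : -∑ w, μ w * (walk w : ℝ) ≤ b := by
    refine (neg_le_abs _).trans ((Finset.abs_sum_le_sum_abs _ _).trans_eq ?_)
    simp only [abs_mul, abs_of_nonneg (hμ _)]
    rfl
  have hbn : b ≤ n := by
    calc b ≤ ∑ w, μ w * n := Finset.sum_le_sum fun w _ =>
          mul_le_mul_of_nonneg_left (mod_cast abs_walk_le w) (hμ w)
      _ = n := by rw [← Finset.sum_mul, hμ1, one_mul]
  have hmoment := sum_prod_mul_walk_moment hp1 n
  simp only [mul_add, Finset.sum_add_distrib, mul_left_comm _ (p _), ← Finset.mul_sum] at hmoment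
  rw [div_mul_eq_mul_div, le_div_iff₀ hp2]
  nlinarith [hp0 0, hp0 1]

theorem tendsto_sum_prod_mul_abs_walk_div (hp0 : ∀ i, 0 ≤ p i) (hp1 : p 0 + p 1 = 1)
    (hp2 : 0 < p 1) :
    Tendsto (fun n : ℕ => (∑ w : Fin n → Fin 2, (∏ i, p (w i)) * |(walk w : ℝ)|) / n)
      atTop (nhds 0) :=
  tendsto_div_natCast_of_sq_le
    (fun _ => Finset.sum_nonneg fun _ _ =>
      mul_nonneg (Finset.prod_nonneg fun _ _ => hp0 _) (abs_nonneg _))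
    (sq_sum_prod_mul_abs_walk_le hp0 hp1 hp2)

end Walk

section NormalForm

variable {M : Type*} [Monoid M] {S : Submonoid M} {D : ℤ → M} {a : Fin 2 → M}

theorem exists_reverse_prod_eq_mul_walk (hD0 : D 0 = 1) (hD : ∀ e f, D e * D f = D (e + f))
    (ha0 : a 0 = D 1) (ha1 : a 1 ∈ S) (hflip : ∀ e, D e * a 1 = a 1 * D (-e))
    {n : ℕ} (w : Fin n → Fin 2) :
    ∃ u ∈ S, (List.ofFn fun i => a (w i)).reverse.prod = u * D (walk w) := by
  induction n with
  | zero => exact ⟨1, S.one_mem, by simp [walk, hD0]⟩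
  | succ n ih =>
    induction w using Fin.consCases with
    | cons x w =>
      obtain ⟨u, hu, h⟩ := ih w
      simp only [walk_cons, List.ofFn_succ, Fin.cons_zero, Fin.cons_succ, List.reverse_cons,
        List.prod_append, List.prod_singleton, h]
      match x with
      | 0 => exact ⟨u, hu, by rw [ha0, mul_assoc, hD]; rfl⟩
      | 1 => exact ⟨u * a 1, S.mul_mem hu ha1, by rw [mul_assoc, hflip, mul_assoc]; rfl⟩

theorem exists_prod_eq_walk_mul (hD0 : D 0 = 1) (hD : ∀ e f, D e * D f = D (e + f))
    (ha0 : a 0 = D (-1)) (ha1 : a 1 ∈ S) (hflip : ∀ e, a 1 * D e = D (-e) * a 1)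
    {n : ℕ} (w : Fin n → Fin 2) :
    ∃ u ∈ S, (List.ofFn fun i => a (w i)).prod = D (-walk w) * u := by
  induction n with
  | zero => exact ⟨1, S.one_mem, by simp [walk, hD0]⟩
  | succ n ih =>
    induction w using Fin.consCases with
    | cons x w =>
      obtain ⟨u, hu, h⟩ := ih w
      simp only [walk_cons, List.ofFn_succ, Fin.cons_zero, Fin.cons_succ, List.prod_cons, h]
      match x with
      | 0 => exact ⟨u, hu, by rw [ha0, ← mul_assoc, hD]; congr 2; simp only [step]; ring⟩
      | 1 => exact ⟨a 1 * u, S.mul_mem ha1 hu, by rw [← mul_assoc, hflip, mul_assoc]; rfl⟩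

end NormalForm

section Matrices

local notation "E²" => EuclideanSpace ℝ (Fin 2)

def diagCLM (σ : ℝ) (e : ℤ) : E² →L[ℝ] E² :=
  toEuclideanCLM (𝕜 := ℝ) (diagonal ![σ ^ e, σ ^ (-e)])

lemma diagCLM_zero (σ : ℝ) : diagCLM σ 0 = 1 := by
  have : ![(1 : ℝ), 1] = fun _ => 1 := by ext i; fin_cases i <;> rfl
  simp [diagCLM, this]

lemma diagCLM_mul_diagCLM {σ : ℝ} (hσ : σ ≠ 0) (e f : ℤ) :
    diagCLM σ e * diagCLM σ f = diagCLM σ (e + f) := by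
  rw [diagCLM, diagCLM, ← map_mul, diagonal_mul_diagonal, diagCLM]
  congr 2
  ext i
  fin_cases i <;> simp [zpow_add₀ hσ, add_comm]

lemma diagCLM_eq_toEuclideanCLM {σ : ℝ} {e : ℤ} {A : Matrix (Fin 2) (Fin 2) ℝ}
    (hA : A = !![σ ^ e, 0; 0, σ ^ (-e)]) : diagCLM σ e = toEuclideanCLM (𝕜 := ℝ) A := by
  rw [diagCLM, diagonal_fin_two, hA]
  rfl

lemma diagCLM_mul_rotation (σ : ℝ) (e : ℤ) :
    diagCLM σ e * toEuclideanCLM (𝕜 := ℝ) !![0, -1; 1, 0]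
      = toEuclideanCLM (𝕜 := ℝ) !![0, -1; 1, 0] * diagCLM σ (-e) := by
  simp only [diagCLM, ← map_mul]
  congr 1
  ext i j
  fin_cases i <;> fin_cases j <;> simp

lemma rotation_inv_mul_diagCLM (σ : ℝ) (e : ℤ) :
    toEuclideanCLM (𝕜 := ℝ) !![0, 1; -1, 0] * diagCLM σ e
      = diagCLM σ (-e) * toEuclideanCLM (𝕜 := ℝ) !![0, 1; -1, 0] := by
  simp only [diagCLM, ← map_mul]
  congr 1
  ext i j
  fin_cases i <;> fin_cases j <;> simp

lemma norm_diagCLM {σ : ℝ} (hσ : 1 ≤ σ) (e : ℤ) : ‖diagCLM σ e‖ = σ ^ |e| := by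
  have hmax : σ ^ |e| = max (σ ^ e) (σ ^ e)⁻¹ := by
    rw [← _root_.zpow_neg]
    rcases le_total 0 e with he | he
    · rw [max_eq_left (zpow_le_zpow_right₀ hσ (by omega)), abs_of_nonneg he]
    · rw [max_eq_right (zpow_le_zpow_right₀ hσ (by omega)), abs_of_nonpos he]
  rw [diagCLM, l2_opNorm_toEuclideanCLM, l2_opNorm_diagonal, hmax]
  simp [Pi.norm_def, Fin.univ_succ, abs_of_pos (zero_lt_one.trans_le hσ)]

theorem norm_reverse_prod_eq {σ : ℝ} (hσ : 1 ≤ σ) {A : Fin 2 → E² →L[ℝ] E²}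
    (hA0 : A 0 = toEuclideanCLM (𝕜 := ℝ) !![σ, 0; 0, σ⁻¹])
    (hA1 : A 1 = toEuclideanCLM (𝕜 := ℝ) !![0, -1; 1, 0]) {n : ℕ} (w : Fin n → Fin 2) :
    ‖(List.ofFn fun i => A (w i)).reverse.prod‖ = σ ^ |walk w| := by
  obtain ⟨u, hu, h⟩ := exists_reverse_prod_eq_mul_walk (diagCLM_zero σ)
    (diagCLM_mul_diagCLM (by positivity)) (hA0.trans (diagCLM_eq_toEuclideanCLM (by simp)).symm)
    (hA1 ▸ Unitary.map_mem _ (mem_unitaryGroup_iff.mpr <| by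
      ext i j; fin_cases i <;> fin_cases j <;> simp [mul_apply, Fin.sum_univ_two]))
    (hA1 ▸ diagCLM_mul_rotation σ) w
  rw [h, CStarRing.norm_coe_unitary_mul ⟨u, hu⟩, norm_diagCLM hσ]

theorem norm_prod_eq {σ : ℝ} (hσ : 1 ≤ σ) {B : Fin 2 → E² →L[ℝ] E²}
    (hB0 : B 0 = toEuclideanCLM (𝕜 := ℝ) !![σ⁻¹, 0; 0, σ])
    (hB1 : B 1 = toEuclideanCLM (𝕜 := ℝ) !![0, 1; -1, 0]) {n : ℕ} (w : Fin n → Fin 2) :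
    ‖(List.ofFn fun i => B (w i)).prod‖ = σ ^ |walk w| := by
  obtain ⟨u, hu, h⟩ := exists_prod_eq_walk_mul (diagCLM_zero σ)
    (diagCLM_mul_diagCLM (by positivity)) (hB0.trans (diagCLM_eq_toEuclideanCLM (by simp)).symm)
    (hB1 ▸ Unitary.map_mem _ (mem_unitaryGroup_iff.mpr <| by
      ext i j; fin_cases i <;> fin_cases j <;> simp [mul_apply, Fin.sum_univ_two]))
    (hB1 ▸ rotation_inv_mul_diagCLM σ) w
  rw [h, CStarRing.norm_mul_coe_unitary _ ⟨u, hu⟩, norm_diagCLM hσ, abs_neg]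

end Matrices

end KiferExample

open KiferExample in
/-- Kifer's example (Remark `r.vanishingpi`): for the i.i.d. random product of
`A₁ = diag(σ, σ⁻¹)` (σ > 1) and the rotation `A₂ = [[0,−1],[1,0]]` with weights
`(p₁,p₂)`, `p₂ > 0`, both Lyapunov exponents vanish:
`λ₊ = lim (1/n) E[log‖L^n‖] = 0` and `λ₋ = lim (1/n) E[log‖(L^n)⁻¹‖⁻¹] = 0`.
In particular, since `λ₊(A,(1,0)) = log σ > 0` (third claim), the Lyapunov exponents
are discontinuous at the degenerate probability vector `(1,0)`. -/
theorem stmt19 (σ : ℝ) (hσ : 1 < σ) (p : Fin 2 → ℝ)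
    (hp0 : ∀ i, 0 ≤ p i) (hp1 : p 0 + p 1 = 1) (hp2 : 0 < p 1)
    (A Ainv : Fin 2 → (EuclideanSpace ℝ (Fin 2) →L[ℝ] EuclideanSpace ℝ (Fin 2)))
    (hA0 : A 0 = Matrix.toEuclideanCLM (𝕜 := ℝ) !![σ, 0; 0, σ⁻¹])
    (hA1 : A 1 = Matrix.toEuclideanCLM (𝕜 := ℝ) !![0, -1; 1, 0])
    (hAinv0 : Ainv 0 = Matrix.toEuclideanCLM (𝕜 := ℝ) !![σ⁻¹, 0; 0, σ])
    (hAinv1 : Ainv 1 = Matrix.toEuclideanCLM (𝕜 := ℝ) !![0, 1; -1, 0]) :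
    Tendsto (fun n : ℕ => (1 / (n : ℝ)) * ∑ w : Fin n → Fin 2,
        (∏ i, p (w i)) * Real.log ‖(List.ofFn fun i => A (w i)).reverse.prod‖)
      atTop (nhds 0)
    ∧ Tendsto (fun n : ℕ => (1 / (n : ℝ)) * ∑ w : Fin n → Fin 2,
        (∏ i, p (w i)) * Real.log (‖(List.ofFn fun i => Ainv (w i)).prod‖⁻¹))
      atTop (nhds 0)
    ∧ Tendsto (fun n : ℕ =>
        (1 / (n : ℝ)) * Real.log ‖(List.ofFn fun _ : Fin n => A 0).prod‖)
      atTop (nhds (Real.log σ)) := by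
  have hlog : ∀ k : ℤ, Real.log (σ ^ |k|) = |(k : ℝ)| * Real.log σ := fun k => by
    rw [Real.log_zpow, Int.cast_abs]
  have hvanish := (tendsto_sum_prod_mul_abs_walk_div hp0 hp1 hp2).const_mul (Real.log σ)
  rw [mul_zero] at hvanish
  have hsum : ∀ n : ℕ, (1 / (n : ℝ)) * ∑ w : Fin n → Fin 2, (∏ i, p (w i)) *
      (|(walk w : ℝ)| * Real.log σ) =
      Real.log σ * ((∑ w : Fin n → Fin 2, (∏ i, p (w i)) * |(walk w : ℝ)|) / n) := fun n => by
    rw [Finset.mul_sum, Finset.sum_div, Finset.mul_sum]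
    exact Finset.sum_congr rfl fun _ _ => by ring
  refine ⟨?_, ?_, ?_⟩
  · simpa only [norm_reverse_prod_eq hσ.le hA0 hA1, hlog, hsum] using hvanish
  · simpa only [norm_prod_eq hσ.le hAinv0 hAinv1, Real.log_inv, hlog, mul_neg,
      Finset.sum_neg_distrib, hsum, neg_zero] using hvanish.neg
  · refine tendsto_const_nhds.congr' ((eventually_ne_atTop 0).mono fun n hn => ?_)
    have hrev : List.ofFn (fun _ : Fin n => A 0)
        = (List.ofFn fun i => A ((fun _ : Fin n => (0 : Fin 2)) i)).reverse := by
      simp [List.ofFn_const]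
    dsimp only
    rw [hrev, norm_reverse_prod_eq hσ.le hA0 hA1, walk_const_zero, hlog, Int.cast_natCast,
      Nat.abs_cast]
    field_simp
end
end
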